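/- Let n ≥ 3 be a prime and let G be the graph of Construction 1. For each l ∈ [n], let G_l be the subgraph of G induced by P^l ∪ Q. Then for any two distinct vertices w, w' ∈ Q, the neighborhoods of w and w' in G_l share at most one vertex: |N_{G_l}(w) ∩ N_{G_l}(w')| ≤ 1. -/

import Mathlib

open SimpleGraph

/-- Entry of the Latin square `L_i`:  `L_i(j,k) ≡ j + i·(k-1) (mod n)`, with
indices and entries taken in `ZMod n` (identifying `[n] = {1,…,n}` with `ZMod n`). -/
def latinL (n : ℕ) (i j k : ZMod n) : ZMod n := j + i * (k - 1)

/-- The vertices of the graph `G` of Construction 1: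
`pv k m l` is `v_{k,m}^l ∈ P`, `qv i j` is `w_{i,j} ∈ Q` (with `i ≠ 0`, i.e. `i ∈ [n-1]`),
`rv i j` is `u_{i,j} ∈ R`, and `sv m` is `s_m ∈ S`. -/
inductive Vert (n : ℕ) : Type
  | pv (k m l : ZMod n) : Vert n
  | qv (i : {x : ZMod n // x ≠ 0}) (j : ZMod n) : Vert n
  | rv (i : {x : ZMod n // x ≠ 0}) (j : ZMod n) : Vert n
  | sv (m : ZMod n) : Vert n

/-- One-directional description of the edges of Construction 1:
`w_{i,j}` is adjacent to `v_{k, L_i(j,k)}^l` for all `k, l`;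
`u_{i,j}` is adjacent to every vertex of `T_{l, L_i(j,l)}` for every `l`;
`s_m` is adjacent to every vertex of `T_{l,m}` for every `l`. -/
def rel {n : ℕ} : Vert n → Vert n → Prop
  | .qv i j, .pv k m _ => m = latinL n i.1 j k
  | .rv i j, .pv _ m l => m = latinL n i.1 j l
  | .sv m', .pv _ m _ => m = m'
  | _, _ => False

/-- The bipartite graph `G` of Construction 1. -/
def GraphG (n : ℕ) : SimpleGraph (Vert n) where
  Adj x y := rel x y ∨ rel y x
  symm := ⟨fun _ _ h => h.symm⟩
  loopless := ⟨by intro x h; cases x <;> simp [rel] at h⟩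

/-- The square `G²` of a graph `G`: two distinct vertices are adjacent iff
their distance in `G` is at most 2 (i.e. they are adjacent or have a common neighbor). -/
def square {V : Type*} (G : SimpleGraph V) : SimpleGraph V where
  Adj x y := x ≠ y ∧ (G.Adj x y ∨ ∃ z, G.Adj x z ∧ G.Adj z y)
  symm := by
    constructor
    rintro x y ⟨hxy, h | ⟨z, h1, h2⟩⟩
    · exact ⟨hxy.symm, Or.inl h.symm⟩
    · exact ⟨hxy.symm, Or.inr ⟨z, h2.symm, h1.symm⟩⟩
  loopless := ⟨fun x h => h.1 rfl⟩

/-- `P_k^l = {v_{k,1}^l, …, v_{k,n}^l}`. -/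
def Pkl (n : ℕ) (k l : ZMod n) : Set (Vert n) := {x | ∃ m, x = Vert.pv k m l}

/-- `P^l = P_1^l ∪ ⋯ ∪ P_n^l`. -/
def PlSet (n : ℕ) (l : ZMod n) : Set (Vert n) := {x | ∃ k m, x = Vert.pv k m l}

/-- `P = P^1 ∪ ⋯ ∪ P^n`. -/
def Pset (n : ℕ) : Set (Vert n) := {x | ∃ k m l, x = Vert.pv k m l}

/-- `T_{l,m} = {v_{1,m}^l, …, v_{n,m}^l}`. -/
def Tlm (n : ℕ) (l m : ZMod n) : Set (Vert n) := {x | ∃ k, x = Vert.pv k m l}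

/-- `Q_i = {w_{i,1}, …, w_{i,n}}`. -/
def QiSet (n : ℕ) (i : {x : ZMod n // x ≠ 0}) : Set (Vert n) := {x | ∃ j, x = Vert.qv i j}

/-- `Q = Q_1 ∪ ⋯ ∪ Q_{n-1}`. -/
def Qset (n : ℕ) : Set (Vert n) := {x | ∃ i j, x = Vert.qv i j}

/-- `R_i = {u_{i,1}, …, u_{i,n}}`. -/
def RiSet (n : ℕ) (i : {x : ZMod n // x ≠ 0}) : Set (Vert n) := {x | ∃ j, x = Vert.rv i j}

/-- `R = R_1 ∪ ⋯ ∪ R_{n-1}`. -/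
def Rset (n : ℕ) : Set (Vert n) := {x | ∃ i j, x = Vert.rv i j}

/-- `S = {s_1, …, s_n}`. -/
def Sset (n : ℕ) : Set (Vert n) := {x | ∃ m, x = Vert.sv m}

/-- `G_l`, the subgraph of `G` induced by `P^l ∪ Q` (kept on the same vertex type:
all edges of `G` with both endpoints in `P^l ∪ Q`). -/
def Gl (n : ℕ) (l : ZMod n) : SimpleGraph (Vert n) where
  Adj x y := (GraphG n).Adj x y ∧ x ∈ PlSet n l ∪ Qset n ∧ y ∈ PlSet n l ∪ Qset n
  symm := ⟨fun _ _ ⟨h, hx, hy⟩ => ⟨h.symm, hy, hx⟩⟩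
  loopless := ⟨fun x h => (GraphG n).irrefl h.1⟩

/-- `G` is `k`-choosable: for every list assignment with all lists of size at least `k`
there is a proper coloring choosing each color from the corresponding list. -/
def Choosable {V : Type*} (G : SimpleGraph V) (k : ℕ) : Prop :=
  ∀ L : V → Finset ℕ, (∀ v, k ≤ (L v).card) →
    ∃ φ : V → ℕ, (∀ v, φ v ∈ L v) ∧ ∀ ⦃v w⦄, G.Adj v w → φ v ≠ φ w

/-- The list chromatic number `χ_ℓ(G)`: the least `k` such that `G` is `k`-choosable. -/
noncomputable def listChromaticNumber {V : Type*} (G : SimpleGraph V) : ℕ :=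
  sInf {k | Choosable G k}

/-!
Every neighbour of `w_{i,j}` in `G_l` is a vertex `v_{k, L_i(j,k)}^l`, one for each row `k`, so a
common neighbour of `w_{i,j}` and `w_{i',j'}` is a row `k` with `L_i(j,k) = L_{i'}(j',k)`. Two such
rows `k, k'` give `(i - i')(k - k') = 0`, and since `ZMod n` is a field either `k = k'` or `i = i'`;
in the latter case `L_i(j,k) = L_i(j',k)` forces `j = j'`.
-/

theorem latinL_eq_latinL_or_eq {n : ℕ} [Fact n.Prime] {i i' j j' k k' : ZMod n}
    (hk : latinL n i j k = latinL n i' j' k) (hk' : latinL n i j k' = latinL n i' j' k') :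
    (i = i' ∧ j = j') ∨ k = k' := by
  unfold latinL at hk hk'
  have hprod : (i - i') * (k - k') = 0 := by linear_combination hk - hk'
  rcases mul_eq_zero.mp hprod with hi | hkk
  · obtain rfl := sub_eq_zero.mp hi
    exact Or.inl ⟨rfl, add_right_cancel hk⟩
  · exact Or.inr (sub_eq_zero.mp hkk)

theorem Gl_adj_qv_iff {n : ℕ} {l : ZMod n} {i : {x : ZMod n // x ≠ 0}} {j : ZMod n} {x : Vert n} :
    (Gl n l).Adj (.qv i j) x ↔ ∃ k, x = .pv k (latinL n i j k) l := by
  constructor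
  · rintro ⟨hadj, -, ⟨k, m, rfl⟩ | ⟨_, _, rfl⟩⟩
    · rcases hadj with h | h
      · exact ⟨k, by rw [h]⟩
      · exact h.elim
    · rcases hadj with h | h <;> exact h.elim
  · rintro ⟨k, rfl⟩
    exact ⟨Or.inl rfl, Or.inr ⟨i, j, rfl⟩, Or.inl ⟨k, _, rfl⟩⟩

theorem stmt_3_general (n : ℕ) (hn : n.Prime) (l : ZMod n)
    (w w' : Vert n) (hw : w ∈ Qset n) (hw' : w' ∈ Qset n) (hne : w ≠ w') :
    ((Gl n l).neighborSet w ∩ (Gl n l).neighborSet w').ncard ≤ 1 := by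
  have := Fact.mk hn
  obtain ⟨i, j, rfl⟩ := hw
  obtain ⟨i', j', rfl⟩ := hw'
  have hsub : ((Gl n l).neighborSet (.qv i j) ∩ (Gl n l).neighborSet (.qv i' j')).Subsingleton := by
    rintro a ⟨ha, ha'⟩ b ⟨hb, hb'⟩
    obtain ⟨k, rfl⟩ := Gl_adj_qv_iff.mp ha
    obtain ⟨k', rfl⟩ := Gl_adj_qv_iff.mp hb
    obtain ⟨_, hk⟩ := Gl_adj_qv_iff.mp ha'
    obtain ⟨_, hk'⟩ := Gl_adj_qv_iff.mp hb'
    obtain ⟨rfl, hk, -⟩ := Vert.pv.inj hk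
    obtain ⟨rfl, hk', -⟩ := Vert.pv.inj hk'
    rcases latinL_eq_latinL_or_eq hk hk' with ⟨hi, rfl⟩ | rfl
    · exact (hne (by rw [Subtype.ext hi])).elim
    · rfl
  exact (Set.ncard_le_one hsub.finite).mpr hsub

/-- for any two distinct `w, w' ∈ Q`, `|N_{G_l}(w) ∩ N_{G_l}(w')| ≤ 1`. -/
theorem stmt_3 (n : ℕ) (hn : n.Prime) (hn3 : 3 ≤ n) (l : ZMod n)
    (w w' : Vert n) (hw : w ∈ Qset n) (hw' : w' ∈ Qset n) (hne : w ≠ w') :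
    ((Gl n l).neighborSet w ∩ (Gl n l).neighborSet w').ncard ≤ 1 :=
  stmt_3_general n hn l w w' hw hw' hne
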